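/- arXiv:2010.04071 — 2 statements merged into one kernel-verified Lean document; each statement's English description precedes it below -/
import Mathlib

section
/- Let k ≥ 0 and N ≥ 1, and let {H_n} be the PLRS generated by the coefficients [1, 1, 0, ..., 0, N] with k zeros between the two initial 1's and the final coefficient N (so L = k + 3). Then {H_n} is complete if and only if 1 ≤ N ≤ ⌊(F_{k+6} − k − 5)/4⌋, where {F_n} is the Fibonacci sequence with F_1 = 1, F_2 = 2, and F_{n+1} = F_n + F_{n−1}. -/
/-- `H` (indexed from 1) is the Positive Linear Recurrence Sequence generated by the
coefficients `c 1, …, c L` (nonnegative integers with `L`, `c 1`, `c L` positive):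
`H 1 = 1`, `H (n+1) = c 1 * H n + ⋯ + c n * H 1 + 1` for `1 ≤ n < L`, and
`H (n+1) = c 1 * H n + ⋯ + c L * H (n+1-L)` for `n ≥ L`. -/
def IsPLRS (L : ℕ) (c : ℕ → ℕ) (H : ℕ → ℕ) : Prop :=
  0 < L ∧ 0 < c 1 ∧ 0 < c L ∧ H 1 = 1 ∧
  (∀ n, 1 ≤ n → n < L →
    H (n + 1) = (∑ j ∈ Finset.Icc 1 n, c j * H (n + 1 - j)) + 1) ∧
  (∀ n, L ≤ n →
    H (n + 1) = ∑ j ∈ Finset.Icc 1 L, c j * H (n + 1 - j))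

/-- A sequence (indexed from 1) is complete if every positive integer is a sum of
terms of the sequence over a finite set of distinct indices (each ≥ 1). -/
def SeqComplete (H : ℕ → ℕ) : Prop :=
  ∀ m : ℕ, 0 < m → ∃ S : Finset ℕ, (∀ i ∈ S, 1 ≤ i) ∧ m = ∑ i ∈ S, H i

/-- The `n`th Brown's gap of a sequence: `B_{H,n} = 1 + ∑_{i=1}^{n-1} H i − H n`. -/
def BrownGap (H : ℕ → ℕ) (n : ℕ) : ℤ :=
  1 + (∑ i ∈ Finset.Icc 1 (n - 1), (H i : ℤ)) - (H n : ℤ)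

/-- Every positive integer up to the partial sum is representable. -/
lemma brown_rep (H : ℕ → ℕ)
    (hgap : ∀ n, 1 ≤ n → H (n+1) ≤ 1 + ∑ i ∈ Finset.Icc 1 n, H i)
    (h1 : H 1 = 1) :
    ∀ n m, 0 < m → m ≤ ∑ i ∈ Finset.Icc 1 n, H i →
      ∃ S : Finset ℕ, S ⊆ Finset.Icc 1 n ∧ m = ∑ i ∈ S, H i := by
  intro n
  induction n with
  | zero => intro m hm hle; simp at hle; omega
  | succ n ih =>
    intro m hm hle
    rw [Finset.sum_Icc_succ_top (by omega : 1 ≤ n + 1)] at hle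
    by_cases hcase : m ≤ ∑ i ∈ Finset.Icc 1 n, H i
    · obtain ⟨S, hS, hsum⟩ := ih m hm hcase
      exact ⟨S, hS.trans (Finset.Icc_subset_Icc_right (by omega)), hsum⟩
    · push_neg at hcase
      have hHle : H (n+1) ≤ m := by
        rcases Nat.eq_zero_or_pos n with rfl | hn
        · simp at hcase hle ⊢; omega
        · have := hgap n hn; omega
      by_cases hm' : m - H (n+1) = 0
      · refine ⟨{n+1}, by simp, ?_⟩
        rw [Finset.sum_singleton]; omega
      · obtain ⟨S, hS, hsum⟩ := ih (m - H (n+1)) (by omega) (by omega)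
        refine ⟨insert (n+1) S, ?_, ?_⟩
        · intro x hx
          rcases Finset.mem_insert.mp hx with rfl | hx
          · simp
          · exact (Finset.Icc_subset_Icc_right (by omega)) (hS hx)
        · have hnot : n + 1 ∉ S := by
            intro h
            have := hS h
            simp only [Finset.mem_Icc] at this; omega
          rw [Finset.sum_insert hnot]
          omega

lemma brown_complete (H : ℕ → ℕ) (h1 : H 1 = 1)
    (hpos : ∀ n, 1 ≤ n → 1 ≤ H n)
    (hgap : ∀ n, 1 ≤ n → H (n+1) ≤ 1 + ∑ i ∈ Finset.Icc 1 n, H i) :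
    SeqComplete H := by
  intro m hm
  have hsum : m ≤ ∑ i ∈ Finset.Icc 1 m, H i := by
    calc m = (Finset.Icc 1 m).card * 1 := by simp [Nat.card_Icc]
    _ ≤ ∑ i ∈ Finset.Icc 1 m, H i := by
        have := Finset.card_nsmul_le_sum (Finset.Icc 1 m) H 1
          (fun i hi => hpos i (Finset.mem_Icc.mp hi).1)
        simpa using this
  obtain ⟨S, hS, hsum'⟩ := brown_rep H hgap h1 m m hm hsum
  exact ⟨S, fun i hi => (Finset.mem_Icc.mp (hS hi)).1, hsum'⟩

lemma brown_necessary (H : ℕ → ℕ)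
    (hmono : ∀ a b, 1 ≤ a → a ≤ b → H a ≤ H b)
    (hcomp : SeqComplete H) :
    ∀ n, 1 ≤ n → H (n+1) ≤ 1 + ∑ i ∈ Finset.Icc 1 n, H i := by
  intro n hn
  by_contra hlt
  push_neg at hlt
  set m := 1 + ∑ i ∈ Finset.Icc 1 n, H i with hmdef
  obtain ⟨S, hS1, hSm⟩ := hcomp m (by omega)
  have hub : ∀ i ∈ S, i ≤ n := by
    intro i hi
    by_contra h
    push_neg at h
    have h1 : H (n+1) ≤ H i := hmono (n+1) i (by omega) (by omega)
    have h2 : H i ≤ ∑ j ∈ S, H j :=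
      Finset.single_le_sum (fun j _ => Nat.zero_le _) hi
    omega
  have hsub : S ⊆ Finset.Icc 1 n := by
    intro i hi
    exact Finset.mem_Icc.mpr ⟨hS1 i hi, hub i hi⟩
  have : ∑ i ∈ S, H i ≤ ∑ i ∈ Finset.Icc 1 n, H i :=
    Finset.sum_le_sum_of_subset hsub
  omega

section
variable (k N : ℕ) (H : ℕ → ℕ)
  (hH : IsPLRS (k + 3)
      (fun i => if i = 1 ∨ i = 2 then 1 else if i = k + 3 then N else 0) H)
include hH

lemma myH1 : H 1 = 1 := hH.2.2.2.1

lemma myH2 : H 2 = 2 := by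
  have h := hH.2.2.2.2.1 1 le_rfl (by omega)
  simp [Finset.Icc_self, hH.2.2.2.1] at h
  exact h

lemma Hrec_small : ∀ n, 2 ≤ n → n < k + 3 → H (n + 1) = H n + H (n - 1) + 1 := by
  intro n h2 hlt
  have h := hH.2.2.2.2.1 n (by omega) hlt
  have hset : Finset.Icc 1 n = insert 1 (insert 2 (Finset.Icc 3 n)) := by
    ext x; simp only [Finset.mem_Icc, Finset.mem_insert]; omega
  rw [hset, Finset.sum_insert (by simp only [Finset.mem_insert, Finset.mem_Icc]; omega),
    Finset.sum_insert (by simp only [Finset.mem_Icc]; omega),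
    Finset.sum_eq_zero (fun j hj => by
      simp only [Finset.mem_Icc] at hj
      have h1 : ¬(j = 1 ∨ j = 2) := by omega
      have h2 : j ≠ k + 3 := by omega
      simp [h1, h2])] at h
  have e1 : n + 1 - 1 = n := by omega
  have e2 : n + 1 - 2 = n - 1 := by omega
  rw [e1, e2] at h
  simp at h
  omega

lemma Hrec_big : ∀ t, H (k + 4 + t) = H (k + 3 + t) + H (k + 2 + t) + N * H (t + 1) := by
  intro t
  have h := hH.2.2.2.2.2 (k + 3 + t) (by omega)
  have hset : Finset.Icc 1 (k + 3) =
      insert 1 (insert 2 (insert (k + 3) (Finset.Icc 3 (k + 2)))) := by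
    ext x; simp only [Finset.mem_Icc, Finset.mem_insert]; omega
  have h5 : ¬(k + 3 = 1 ∨ k + 3 = 2) := by omega
  rw [hset, Finset.sum_insert (by simp only [Finset.mem_insert, Finset.mem_Icc]; omega),
    Finset.sum_insert (by simp only [Finset.mem_insert, Finset.mem_Icc]; omega),
    Finset.sum_insert (by simp only [Finset.mem_Icc]; omega),
    Finset.sum_eq_zero (fun j hj => by
      simp only [Finset.mem_Icc] at hj
      have h1 : ¬(j = 1 ∨ j = 2) := by omega
      have h2 : j ≠ k + 3 := by omega
      simp [h1, h2])] at h
  have e1 : k + 3 + t + 1 - 1 = k + 3 + t := by omega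
  have e2 : k + 3 + t + 1 - 2 = k + 2 + t := by omega
  have e3 : k + 3 + t + 1 - (k + 3) = t + 1 := by omega
  rw [e1, e2, e3] at h
  norm_num [h5] at h
  have e4 : k + 4 + t = k + 3 + t + 1 := by omega
  rw [e4, h]; ring

lemma Hpos : ∀ n, 1 ≤ n → 1 ≤ H n := by
  intro n
  induction n using Nat.strong_induction_on with
  | _ n ih =>
    intro hn
    match n, hn with
    | 1, _ => rw [myH1 k N H hH]
    | (m+2), _ =>
      by_cases hm : m + 1 < k + 3
      · have h := hH.2.2.2.2.1 (m+1) (by omega) hm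
        have : m + 1 + 1 = m + 2 := rfl
        rw [this] at h
        omega
      · obtain ⟨t, ht⟩ : ∃ t, m + 1 = k + 3 + t := ⟨m + 1 - (k+3), by omega⟩
        have hr := Hrec_big k N H hH t
        have : m + 2 = k + 4 + t := by omega
        rw [this, hr]
        have := ih (k + 3 + t) (by omega) (by omega)
        omega

lemma Hmono : ∀ a b, 1 ≤ a → a ≤ b → H a ≤ H b := by
  have step : ∀ n, 1 ≤ n → H n ≤ H (n + 1) := by
    intro n hn
    by_cases hlt : n < k + 3
    · have h := hH.2.2.2.2.1 n hn hlt
      have hmem : 1 ∈ Finset.Icc 1 n := Finset.mem_Icc.mpr ⟨le_rfl, hn⟩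
      have hle := Finset.single_le_sum
        (f := fun j => (if j = 1 ∨ j = 2 then 1 else if j = k + 3 then N else 0) * H (n + 1 - j))
        (fun j _ => Nat.zero_le _) hmem
      have hc : (if (1:ℕ) = 1 ∨ (1:ℕ) = 2 then 1 else if (1:ℕ) = k + 3 then N else 0) = 1 := by
        norm_num
      have hle' : (if (1:ℕ) = 1 ∨ (1:ℕ) = 2 then 1 else if (1:ℕ) = k + 3 then N else 0) * H (n + 1 - 1)
          ≤ ∑ j ∈ Finset.Icc 1 n,
            (if j = 1 ∨ j = 2 then 1 else if j = k + 3 then N else 0) * H (n + 1 - j) := hle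
      rw [hc, one_mul, Nat.add_sub_cancel] at hle'
      have h' : H (n + 1) = (∑ j ∈ Finset.Icc 1 n,
          (if j = 1 ∨ j = 2 then 1 else if j = k + 3 then N else 0) * H (n + 1 - j)) + 1 := h
      omega
    · obtain ⟨t, ht⟩ : ∃ t, n = k + 3 + t := ⟨n - (k+3), by omega⟩
      have hr := Hrec_big k N H hH t
      have h4 : n + 1 = k + 4 + t := by omega
      rw [h4, hr, ht]
      omega
  intro a b ha hab
  induction b with
  | zero => omega
  | succ b ih =>
    rcases Nat.lt_or_ge a (b+1) with h | h
    · exact le_trans (ih (by omega)) (step b (by omega))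
    · have : a = b + 1 := by omega
      rw [this]
end


section
variable (F : ℕ → ℕ) (hF1 : F 1 = 1) (hF2 : F 2 = 2)
  (hFrec : ∀ n, 1 ≤ n → F (n + 2) = F (n + 1) + F n)
include hF1 hF2 hFrec

lemma fib_ge : ∀ n, 1 ≤ n → n ≤ F n := by
  intro n
  induction n using Nat.strong_induction_on with
  | _ n ih =>
    intro hn
    match n, hn with
    | 1, _ => omega
    | 2, _ => omega
    | (m+3), _ =>
      have h := hFrec (m+1) (by omega)
      have e1 : m + 1 + 2 = m + 3 := by omega
      have e2 : m + 1 + 1 = m + 2 := by omega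
      rw [e1, e2] at h
      have h1 := ih (m+2) (by omega) (by omega)
      have h2 := ih (m+1) (by omega) (by omega)
      omega

lemma fibF3 : F 3 = 3 := by have := hFrec 1 le_rfl; norm_num at this; omega
lemma fibF4 : F 4 = 5 := by
  have := hFrec 2 (by omega); norm_num at this; have := fibF3 F hF1 hF2 hFrec; omega
lemma fibF5 : F 5 = 8 := by
  have := hFrec 3 (by omega); norm_num at this; have := fibF3 F hF1 hF2 hFrec
  have := fibF4 F hF1 hF2 hFrec; omega
lemma fibF6 : F 6 = 13 := by
  have := hFrec 4 (by omega); norm_num at this; have := fibF4 F hF1 hF2 hFrec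
  have := fibF5 F hF1 hF2 hFrec; omega
lemma fibF7 : F 7 = 21 := by
  have := hFrec 5 (by omega); norm_num at this; have := fibF5 F hF1 hF2 hFrec
  have := fibF6 F hF1 hF2 hFrec; omega

lemma fibLB4 : ∀ m, m + 5 ≤ F (m + 4) := by
  intro m
  induction m with
  | zero => have := fibF4 F hF1 hF2 hFrec; norm_num; omega
  | succ m ih =>
    have h := hFrec (m + 3) (by omega)
    have h2 := fib_ge F hF1 hF2 hFrec (m + 3) (by omega)
    have e : m + 3 + 2 = m + 1 + 4 := by omega
    have e2 : m + 3 + 1 = m + 4 := by omega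
    rw [e, e2] at h
    omega

lemma fibLB5 : ∀ m, m + 7 ≤ F (m + 5) := by
  intro m
  induction m with
  | zero => have := fibF5 F hF1 hF2 hFrec; norm_num; omega
  | succ m ih =>
    have h := hFrec (m + 4) (by omega)
    have h2 := fib_ge F hF1 hF2 hFrec (m + 4) (by omega)
    have e : m + 4 + 2 = m + 1 + 5 := by omega
    have e2 : m + 4 + 1 = m + 5 := by omega
    rw [e, e2] at h
    omega

lemma fibC : ∀ m, 3 * m + 17 ≤ F (m + 6) + F (m + 4) := by
  intro m
  induction m with
  | zero => have := fibF6 F hF1 hF2 hFrec; have := fibF4 F hF1 hF2 hFrec; norm_num; omega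
  | succ m ih =>
    have h := hFrec (m + 5) (by omega)
    have h2 := hFrec (m + 3) (by omega)
    have h3 := fibLB5 F hF1 hF2 hFrec m
    have h4 := fib_ge F hF1 hF2 hFrec (m + 3) (by omega)
    have e1 : m + 5 + 2 = m + 1 + 6 := by omega
    have e2 : m + 5 + 1 = m + 6 := by omega
    have e3 : m + 3 + 2 = m + 1 + 4 := by omega
    have e4 : m + 3 + 1 = m + 4 := by omega
    rw [e1, e2] at h; rw [e3, e4] at h2
    omega

lemma fib2 : ∀ m, 2 * m + 5 ≤ F (m + 4) := by
  intro m
  induction m with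
  | zero => have := fibF4 F hF1 hF2 hFrec; norm_num; omega
  | succ m ih =>
    have h := hFrec (m + 3) (by omega)
    have h2 := fib_ge F hF1 hF2 hFrec (m + 3) (by omega)
    have e : m + 3 + 2 = m + 1 + 4 := by omega
    have e2 : m + 3 + 1 = m + 4 := by omega
    rw [e, e2] at h
    omega
end

lemma gap_step (H : ℕ → ℕ) : ∀ n, 1 ≤ n →
    BrownGap H (n + 1) = BrownGap H n + 2 * (H n : ℤ) - (H (n + 1) : ℤ) := by
  intro n hn
  obtain ⟨m, rfl⟩ : ∃ m, n = m + 1 := ⟨n - 1, by omega⟩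
  unfold BrownGap
  have e1 : m + 1 + 1 - 1 = m + 1 := by omega
  have e2 : m + 1 - 1 = m := by omega
  rw [e1, e2, Finset.sum_Icc_succ_top (by omega : 1 ≤ m + 1)]
  ring

section
variable (k N : ℕ) (F H : ℕ → ℕ)
  (hF1 : F 1 = 1) (hF2 : F 2 = 2)
  (hFrec : ∀ n, 1 ≤ n → F (n + 2) = F (n + 1) + F n)
  (hH : IsPLRS (k + 3)
      (fun i => if i = 1 ∨ i = 2 then 1 else if i = k + 3 then N else 0) H)
include hF1 hF2 hFrec hH

lemma Hsmall : ∀ n, 1 ≤ n → n ≤ k + 3 → H n + 1 = F (n + 1) := by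
  intro n
  induction n using Nat.strong_induction_on with
  | _ n ih =>
    intro hn hle
    match n, hn with
    | 1, _ => rw [myH1 k N H hH, hF2]
    | 2, _ =>
      rw [myH2 k N H hH]
      have h3 := hFrec 1 le_rfl
      norm_num at h3 ⊢
      omega
    | (m+3), _ =>
      have hr := Hrec_small k N H hH (m+2) (by omega) (by omega)
      have e1 : m + 2 + 1 = m + 3 := by omega
      have e2 : m + 2 - 1 = m + 1 := by omega
      rw [e1, e2] at hr
      have i1 := ih (m+2) (by omega) (by omega) (by omega)
      have i2 := ih (m+1) (by omega) (by omega) (by omega)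
      have hf := hFrec (m+2) (by omega)
      have e3 : m + 2 + 2 = m + 3 + 1 := by omega
      have e4 : m + 2 + 1 = m + 3 := by omega
      have e5 : m + 1 + 1 = m + 2 := by omega
      rw [e3, e4] at hf
      rw [e4] at i1
      rw [e5] at i2
      omega

lemma G1 : BrownGap H 1 = 0 := by
  unfold BrownGap
  rw [myH1 k N H hH]
  norm_num

lemma Gsmall : ∀ n, 1 ≤ n → n ≤ k + 3 → BrownGap H n = (F n : ℤ) - n := by
  intro n
  induction n using Nat.strong_induction_on with
  | _ n ih =>
    intro hn hle
    match n, hn with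
    | 1, _ =>
      rw [G1 k N F H hF1 hF2 hFrec hH, hF1]; norm_num
    | (m+2), _ =>
      have hstep := gap_step H (m+1) (by omega)
      have e1 : m + 1 + 1 = m + 2 := by omega
      rw [e1] at hstep
      rcases Nat.eq_zero_or_pos m with rfl | hm
      · rw [hstep, G1 k N F H hF1 hF2 hFrec hH, myH1 k N H hH, myH2 k N H hH, hF2]
        norm_num
      · have hr := Hrec_small k N H hH (m+1) (by omega) (by omega)
        have e2 : m + 1 + 1 = m + 2 := by omega
        have e3 : m + 1 - 1 = m := by omega
        rw [e2, e3] at hr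
        have i1 := ih (m+1) (by omega) (by omega) (by omega)
        have s1 := Hsmall k N F H hF1 hF2 hFrec hH (m+1) (by omega) (by omega)
        rw [e2] at s1
        have s2 := Hsmall k N F H hF1 hF2 hFrec hH m (by omega) (by omega)
        have hf := hFrec m (by omega)
        rw [hstep, i1]
        push_cast
        omega

lemma GL1 : BrownGap H (k + 4) = (F (k + 4) : ℤ) - (k + 3) - N := by
  have hstep := gap_step H (k + 3) (by omega)
  have e1 : k + 3 + 1 = k + 4 := by omega
  rw [e1] at hstep
  have hr := Hrec_big k N H hH 0
  norm_num [myH1 k N H hH] at hr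
  have g3 := Gsmall k N F H hF1 hF2 hFrec hH (k+3) (by omega) (by omega)
  have s3 := Hsmall k N F H hF1 hF2 hFrec hH (k+3) (by omega) (by omega)
  have s2 := Hsmall k N F H hF1 hF2 hFrec hH (k+2) (by omega) (by omega)
  have e2 : k + 3 + 1 = k + 4 := by omega
  rw [e2] at s3
  have e3 : k + 2 + 1 = k + 3 := by omega
  rw [e3] at s2
  rw [hstep, g3, hr]
  push_cast
  omega

lemma GL2 : BrownGap H (k + 5) = (F (k + 5) : ℤ) - (k + 4) - 2 * N := by
  have hstep := gap_step H (k + 4) (by omega)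
  have e1 : k + 4 + 1 = k + 5 := by omega
  rw [e1] at hstep
  have hr0 := Hrec_big k N H hH 0
  norm_num [myH1 k N H hH] at hr0
  have hr1 := Hrec_big k N H hH 1
  rw [myH2 k N H hH] at hr1
  have e2 : k + 4 + 1 = k + 5 := by omega
  have e3 : k + 3 + 1 = k + 4 := by omega
  have e4 : k + 2 + 1 = k + 3 := by omega
  rw [e2, e3, e4] at hr1
  have g := GL1 k N F H hF1 hF2 hFrec hH
  have s3 := Hsmall k N F H hF1 hF2 hFrec hH (k+3) (by omega) (by omega)
  have s2 := Hsmall k N F H hF1 hF2 hFrec hH (k+2) (by omega) (by omega)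
  rw [e3] at s3
  rw [e4] at s2
  have hf := hFrec (k+3) (by omega)
  have e5 : k + 3 + 2 = k + 5 := by omega
  rw [e5, e3] at hf
  rw [hstep, g, hr1]
  push_cast
  omega

lemma GL3 : BrownGap H (k + 6) = (F (k + 6) : ℤ) - (k + 5) - 4 * N := by
  have hstep := gap_step H (k + 5) (by omega)
  have e1 : k + 5 + 1 = k + 6 := by omega
  rw [e1] at hstep
  have hr1 := Hrec_big k N H hH 1
  rw [myH2 k N H hH] at hr1
  have e2 : k + 4 + 1 = k + 5 := by omega
  have e3 : k + 3 + 1 = k + 4 := by omega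
  have e4 : k + 2 + 1 = k + 3 := by omega
  rw [e2, e3, e4] at hr1
  have hr2 := Hrec_big k N H hH 2
  have h3 : H 3 = 4 := by
    have hs := Hsmall k N F H hF1 hF2 hFrec hH 3 (by omega) (by omega)
    have h4 := hFrec 2 (by omega)
    norm_num at h4 hs
    have h3' := hFrec 1 le_rfl
    norm_num at h3'
    omega
  rw [h3] at hr2
  have e5 : k + 4 + 2 = k + 6 := by omega
  have e6 : k + 3 + 2 = k + 5 := by omega
  have e7 : k + 2 + 2 = k + 4 := by omega
  rw [e5, e6, e7] at hr2
  have g := GL2 k N F H hF1 hF2 hFrec hH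
  have s3 := Hsmall k N F H hF1 hF2 hFrec hH (k+3) (by omega) (by omega)
  rw [e3] at s3
  have hf := hFrec (k+4) (by omega)
  have e8 : k + 4 + 2 = k + 6 := by omega
  rw [e8, e2] at hf
  rw [hstep, g, hr2, hr1]
  push_cast
  omega

lemma Grec : ∀ t, BrownGap H (k + 5 + t) = BrownGap H (k + 4 + t) + BrownGap H (k + 3 + t)
    + N * BrownGap H (t + 2) + ((k : ℤ) + 2 - N) := by
  intro t
  induction t with
  | zero =>
    have g5 := GL2 k N F H hF1 hF2 hFrec hH
    have g4 := GL1 k N F H hF1 hF2 hFrec hH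
    have g3 := Gsmall k N F H hF1 hF2 hFrec hH (k+3) (by omega) (by omega)
    have g2 : BrownGap H 2 = 0 := by
      have hh := Gsmall k N F H hF1 hF2 hFrec hH 2 (by omega) (by omega)
      rw [hh, hF2]; norm_num
    have hf := hFrec (k+3) (by omega)
    have e5 : k + 3 + 2 = k + 5 := by omega
    have e3 : k + 3 + 1 = k + 4 := by omega
    rw [e5, e3] at hf
    norm_num [g5, g4, g3, g2]
    push_cast
    omega
  | succ t ih =>
    have s6 := gap_step H (k + 5 + t) (by omega)
    have s1 := gap_step H (k + 4 + t) (by omega)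
    have s2 := gap_step H (k + 3 + t) (by omega)
    have s4 := gap_step H (t + 2) (by omega)
    have hb2 := Hrec_big k N H hH (t + 1)
    have hb3 := Hrec_big k N H hH (t + 2)
    have e1 : k + 5 + t + 1 = k + 6 + t := by omega
    have e2 : k + 4 + t + 1 = k + 5 + t := by omega
    have e3 : k + 3 + t + 1 = k + 4 + t := by omega
    have e4 : t + 2 + 1 = t + 3 := by omega
    rw [e1] at s6; rw [e2] at s1; rw [e3] at s2; rw [e4] at s4
    have f1 : k + 4 + (t + 1) = k + 5 + t := by omega
    have f2 : k + 3 + (t + 1) = k + 4 + t := by omega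
    have f3 : k + 2 + (t + 1) = k + 3 + t := by omega
    have f4 : t + 1 + 1 = t + 2 := by omega
    rw [f1, f2, f3, f4] at hb2
    have f5 : k + 4 + (t + 2) = k + 6 + t := by omega
    have f6 : k + 3 + (t + 2) = k + 5 + t := by omega
    have f7 : k + 2 + (t + 2) = k + 4 + t := by omega
    have f8 : t + 2 + 1 = t + 3 := by omega
    rw [f5, f6, f7, f8] at hb3
    have hb2' : (H (k + 5 + t) : ℤ) = H (k + 4 + t) + H (k + 3 + t) + N * H (t + 2) := by
      exact_mod_cast hb2
    have hb3' : (H (k + 6 + t) : ℤ) = H (k + 5 + t) + H (k + 4 + t) + N * H (t + 3) := by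
      exact_mod_cast hb3
    have g1 : k + 5 + (t + 1) = k + 6 + t := by omega
    have g2 : k + 4 + (t + 1) = k + 5 + t := by omega
    have g3 : k + 3 + (t + 1) = k + 4 + t := by omega
    have g4 : t + 1 + 2 = t + 3 := by omega
    rw [g1, g2, g3, g4]
    linear_combination ih + s6 - s1 - s2 - (N : ℤ) * s4 + 2 * hb2' - hb3'
end

theorem stmt5 (k N : ℕ) (hN : 1 ≤ N) (F H : ℕ → ℕ)
    (hF1 : F 1 = 1) (hF2 : F 2 = 2)
    (hFrec : ∀ n, 1 ≤ n → F (n + 2) = F (n + 1) + F n)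
    (hH : IsPLRS (k + 3)
      (fun i => if i = 1 ∨ i = 2 then 1 else if i = k + 3 then N else 0) H) :
    SeqComplete H ↔
      (1 ≤ N ∧ (N : ℤ) ≤ ⌊((F (k + 6) : ℚ) - (k : ℚ) - 5) / 4⌋) := by
  have hfloor : ((N : ℤ) ≤ ⌊((F (k + 6) : ℚ) - (k : ℚ) - 5) / 4⌋) ↔
      4 * N + k + 5 ≤ F (k + 6) := by
    rw [Int.le_floor, le_div_iff₀ (by norm_num : (0:ℚ) < 4)]
    constructor
    · intro h
      have h' : ((4 * N + k + 5 : ℕ) : ℚ) ≤ ((F (k + 6) : ℕ) : ℚ) := by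
        push_cast
        push_cast at h
        linarith
      exact_mod_cast h'
    · intro h
      have h' : ((4 * N + k + 5 : ℕ) : ℚ) ≤ ((F (k + 6) : ℕ) : ℚ) := by exact_mod_cast h
      push_cast at h' ⊢
      linarith
  have hGL3 := GL3 k N F H hF1 hF2 hFrec hH
  constructor
  · -- completeness implies the bound
    intro hcomp
    refine ⟨hN, ?_⟩
    rw [hfloor]
    have hb := brown_necessary H (Hmono k N H hH) hcomp (k + 5) (by omega)
    have e : k + 5 + 1 = k + 6 := by omega
    rw [e] at hb
    have hb' : (H (k + 6) : ℤ) ≤ 1 + ∑ i ∈ Finset.Icc 1 (k + 5), (H i : ℤ) := by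
      exact_mod_cast hb
    have hG : 0 ≤ BrownGap H (k + 6) := by
      unfold BrownGap
      have e2 : k + 6 - 1 = k + 5 := by omega
      rw [e2]
      linarith
    rw [hGL3] at hG
    omega
  · rintro ⟨-, hfl⟩
    rw [hfloor] at hfl
    -- all Brown gaps are nonnegative
    have hGnn : ∀ n, 1 ≤ n → 0 ≤ BrownGap H n := by
      rcases Nat.lt_or_ge (k + 2) N with hNge | hNle
      · -- hard case : k + 3 ≤ N
        have hNge' : k + 3 ≤ N := hNge
        have hk2 : 2 ≤ k := by
          by_contra hk
          push_neg at hk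
          have h6 := fibF6 F hF1 hF2 hFrec
          have h7 := fibF7 F hF1 hF2 hFrec
          interval_cases k <;> norm_num at hfl <;> omega
        obtain ⟨j, rfl⟩ : ∃ j, k = j + 2 := ⟨k - 2, by omega⟩
        set k := j + 2 with hk
        have hf6 : F (k + 6) = F (k + 5) + F (k + 4) := by
          have h := hFrec (k + 4) (by omega)
          have e1 : k + 4 + 2 = k + 6 := by omega
          have e2 : k + 4 + 1 = k + 5 := by omega
          rw [e1, e2] at h
          exact h
        have hf5 : F (k + 5) = F (k + 4) + F (k + 3) := by
          have h := hFrec (k + 3) (by omega)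
          have e1 : k + 3 + 2 = k + 5 := by omega
          have e2 : k + 3 + 1 = k + 4 := by omega
          rw [e1, e2] at h
          exact h
        have hf4 : F (k + 4) = F (k + 3) + F (k + 2) := by
          have h := hFrec (k + 2) (by omega)
          have e1 : k + 2 + 2 = k + 4 := by omega
          have e2 : k + 2 + 1 = k + 3 := by omega
          rw [e1, e2] at h
          exact h
        have hC : 3 * j + 17 ≤ F (k + 4) + F (k + 2) := by
          have h := fibC F hF1 hF2 hFrec j
          have e1 : j + 6 = k + 4 := by omega
          have e2 : j + 4 = k + 2 := by omega
          rw [e1, e2] at h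
          exact h
        have hD : k + 5 ≤ F (k + 3) := by
          have h := fibLB5 F hF1 hF2 hFrec j
          have e1 : j + 5 = k + 3 := by omega
          rw [e1] at h
          omega
        have hG4 : BrownGap H 4 = 1 := by
          have h := Gsmall k N F H hF1 hF2 hFrec hH 4 (by omega) (by omega)
          have h4 := fibF4 F hF1 hF2 hFrec
          rw [h, h4]
          norm_num
        have hG5 : BrownGap H 5 = 3 := by
          have h := Gsmall k N F H hF1 hF2 hFrec hH 5 (by omega) (by omega)
          have h5 := fibF5 F hF1 hF2 hFrec
          rw [h, h5]
          norm_num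
        have key : ∀ n, 1 ≤ n → (0 ≤ BrownGap H n ∧
            (4 ≤ n → n ≤ k + 5 → 1 ≤ BrownGap H n) ∧
            (n = k + 7 → 1 ≤ BrownGap H n) ∧
            (k + 8 ≤ n → 2 * (N : ℤ) + k + 2 ≤ BrownGap H n)) := by
          intro n
          induction n using Nat.strong_induction_on with
          | _ n ih =>
            intro hn
            rcases Nat.lt_or_ge n (k + 4) with hlt | hge
            · -- n ≤ k + 3
              have g := Gsmall k N F H hF1 hF2 hFrec hH n hn (by omega)
              refine ⟨?_, ?_, ?_, ?_⟩
              · rw [g]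
                have := fib_ge F hF1 hF2 hFrec n hn
                push_cast
                omega
              · intro h4 _
                rw [g]
                obtain ⟨m, rfl⟩ : ∃ m, n = m + 4 := ⟨n - 4, by omega⟩
                have := fibLB4 F hF1 hF2 hFrec m
                push_cast
                omega
              · intro he; omega
              · intro he; omega
            · rcases Nat.lt_or_ge n (k + 9) with h9 | h9
              · have hcase : n = k + 4 ∨ n = k + 5 ∨ n = k + 6 ∨ n = k + 7 ∨ n = k + 8 := by
                  omega
                rcases hcase with rfl | rfl | rfl | rfl | rfl
                · -- n = k + 4
                  have g := GL1 k N F H hF1 hF2 hFrec hH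
                  have h1 : (1 : ℤ) ≤ BrownGap H (k + 4) := by
                    rw [g]; push_cast; omega
                  exact ⟨by omega, fun _ _ => h1, by omega, by omega⟩
                · -- n = k + 5
                  have g := GL2 k N F H hF1 hF2 hFrec hH
                  have h1 : (1 : ℤ) ≤ BrownGap H (k + 5) := by
                    rw [g]; push_cast; omega
                  exact ⟨by omega, fun _ _ => h1, by omega, by omega⟩
                · -- n = k + 6
                  have h0 : (0 : ℤ) ≤ BrownGap H (k + 6) := by
                    rw [hGL3]; push_cast; omega
                  exact ⟨h0, by omega, by omega, by omega⟩
                · -- n = k + 7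
                  have g := Grec k N F H hF1 hF2 hFrec hH 2
                  have e1 : k + 5 + 2 = k + 7 := by omega
                  have e2 : k + 4 + 2 = k + 6 := by omega
                  have e3 : k + 3 + 2 = k + 5 := by omega
                  have e4 : (2 : ℕ) + 2 = 4 := by omega
                  rw [e1, e2, e3, e4, hG4] at g
                  have i6 := (ih (k + 6) (by omega) (by omega)).1
                  have i5 := (ih (k + 5) (by omega) (by omega)).2.1 (by omega) (by omega)
                  have h1 : (1 : ℤ) ≤ BrownGap H (k + 7) := by
                    rw [g]; push_cast; linarith
                  exact ⟨by linarith, by omega, fun _ => h1, by omega⟩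
                · -- n = k + 8
                  have g := Grec k N F H hF1 hF2 hFrec hH 3
                  have e1 : k + 5 + 3 = k + 8 := by omega
                  have e2 : k + 4 + 3 = k + 7 := by omega
                  have e3 : k + 3 + 3 = k + 6 := by omega
                  have e4 : (3 : ℕ) + 2 = 5 := by omega
                  rw [e1, e2, e3, e4, hG5] at g
                  have i7 := (ih (k + 7) (by omega) (by omega)).2.2.1 rfl
                  have i6 := (ih (k + 6) (by omega) (by omega)).1
                  have hNc : (k : ℤ) + 3 ≤ N := by exact_mod_cast hNge'
                  have h1 : 2 * (N : ℤ) + k + 2 ≤ BrownGap H (k + 8) := by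
                    rw [g]; push_cast; linarith
                  refine ⟨by linarith, by omega, by omega, fun _ => h1⟩
              · -- n ≥ k + 9
                obtain ⟨t, rfl⟩ : ∃ t, n = k + 5 + t := ⟨n - (k + 5), by omega⟩
                have ht4 : 4 ≤ t := by omega
                have g := Grec k N F H hF1 hF2 hFrec hH t
                have i1 := (ih (k + 4 + t) (by omega) (by omega)).2.2.2 (by omega)
                have i2 := (ih (k + 3 + t) (by omega) (by omega)).1
                have iQ := ih (t + 2) (by omega) (by omega)
                have hNc : (k : ℤ) + 3 ≤ N := by exact_mod_cast hNge'
                rcases Nat.decEq (t + 2) (k + 6) with he | he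
                · -- t + 2 ≠ k + 6 : G (t+2) ≥ 1
                  have hG1 : (1 : ℤ) ≤ BrownGap H (t + 2) := by
                    rcases Nat.lt_or_ge (t + 2) (k + 6) with hc | hc
                    · exact iQ.2.1 (by omega) (by omega)
                    · rcases Nat.lt_or_ge (t + 2) (k + 8) with hc2 | hc2
                      · exact iQ.2.2.1 (by omega)
                      · have := iQ.2.2.2 hc2
                        have hNc' : (0 : ℤ) ≤ N := by positivity
                        linarith
                  have hmul : (N : ℤ) * 1 ≤ (N : ℤ) * BrownGap H (t + 2) :=
                    mul_le_mul_of_nonneg_left hG1 (by positivity)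
                  have hlow : 2 * (N : ℤ) + k + 2 ≤ BrownGap H (k + 5 + t) := by
                    rw [g]; linarith
                  exact ⟨by linarith, by omega, by omega, fun _ => hlow⟩
                · -- t + 2 = k + 6
                  have i2' := (ih (k + 3 + t) (by omega) (by omega)).2.2.2 (by omega)
                  have hG0 : (0 : ℤ) ≤ BrownGap H (t + 2) := iQ.1
                  have hmul : (0 : ℤ) ≤ (N : ℤ) * BrownGap H (t + 2) := by positivity
                  have hlow : 2 * (N : ℤ) + k + 2 ≤ BrownGap H (k + 5 + t) := by
                    rw [g]; linarith
                  exact ⟨by linarith, by omega, by omega, fun _ => hlow⟩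
        intro n hn
        exact (key n hn).1
      · -- easy case : N ≤ k + 2
        intro n
        induction n using Nat.strong_induction_on with
        | _ n ih =>
          intro hn
          rcases Nat.lt_or_ge n (k + 4) with hlt | hge
          · have g := Gsmall k N F H hF1 hF2 hFrec hH n hn (by omega)
            rw [g]
            have := fib_ge F hF1 hF2 hFrec n hn
            push_cast
            omega
          · rcases Nat.lt_or_ge n (k + 5) with h5 | h5
            · have hn4 : n = k + 4 := by omega
              subst hn4
              have g := GL1 k N F H hF1 hF2 hFrec hH
              rw [g]
              have := fib2 F hF1 hF2 hFrec k
              push_cast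
              omega
            · obtain ⟨t, rfl⟩ : ∃ t, n = k + 5 + t := ⟨n - (k + 5), by omega⟩
              have g := Grec k N F H hF1 hF2 hFrec hH t
              have i1 := ih (k + 4 + t) (by omega) (by omega)
              have i2 := ih (k + 3 + t) (by omega) (by omega)
              have i3 := ih (t + 2) (by omega) (by omega)
              have hmul : (0 : ℤ) ≤ (N : ℤ) * BrownGap H (t + 2) := by positivity
              have hNc : (N : ℤ) ≤ k + 2 := by exact_mod_cast hNle
              rw [g]
              linarith
    apply brown_complete H (myH1 k N H hH) (Hpos k N H hH)
    intro n hn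
    have hG := hGnn (n + 1) (by omega)
    unfold BrownGap at hG
    have e : n + 1 - 1 = n := by omega
    rw [e] at hG
    have h2 : (H (n + 1) : ℤ) ≤ 1 + ∑ i ∈ Finset.Icc 1 n, (H i : ℤ) := by linarith
    have h3 : (H (n + 1) : ℤ) ≤ ((1 + ∑ i ∈ Finset.Icc 1 n, H i : ℕ) : ℤ) := by
      push_cast
      linarith
    exact_mod_cast h3
end

section
/- Let k ≥ 1 and let {H_n} be the PLRS generated by the coefficients [1, ..., 1, 0, 4] consisting of k ones, then a single 0, then 4 (so L = k + 2). Then {H_n} is incomplete; moreover, the nth Brown's gap satisfies B_{H,n} ≥ 0 for all n ≤ 2k + 2 and B_{H, 2k+3} < 0, i.e., the sequence fails Brown's criterion for the first time at the (2k+3)rd term (equivalently, the (2L−1)th term). -/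
/-
The first `k + 1` terms are `1, 2, 4, …, 2 ^ k`, each one more than the sum of its predecessors,
so Brown's gaps vanish there; then `H (k + 2) = 2 ^ (k + 1) - 1` and from `n = k + 2` on the
recurrence gives `B (n + 1) = 1 + (H 1 + ⋯ + H (n - k)) - 4 H (n - k - 1)`. While `n - k ≤ k + 1`
this is `1 + (2 ^ (n - k) - 1) - 4 · 2 ^ (n - k - 2) = 0`, but at `n = 2k + 2` the partial sum
`H 1 + ⋯ + H (k + 2) = 2 ^ (k + 2) - 2` falls one short and the gap is `-1`. A negative Brown's
gap `B n < 0` of a nondecreasing sequence makes `H n - 1` unrepresentable.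
-/

open Finset

theorem sum_Icc_one_sub_reflect {M : Type*} [AddCommMonoid M] (f : ℕ → M) {m n : ℕ}
    (h : m ≤ n) : ∑ j ∈ Icc 1 m, f (n + 1 - j) = ∑ i ∈ Icc (n + 1 - m) n, f i := by
  refine sum_nbij' (fun j => n + 1 - j) (fun i => n + 1 - i) ?_ ?_ ?_ ?_ (fun _ _ => rfl) <;>
    intro a ha <;> simp only [mem_Icc] at * <;> omega

theorem sum_Icc_one_add_sum_Icc {M : Type*} [AddCommMonoid M] (f : ℕ → M) {m n : ℕ}
    (h : m ≤ n) : ∑ i ∈ Icc 1 m, f i + ∑ i ∈ Icc (m + 1) n, f i = ∑ i ∈ Icc 1 n, f i := by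
  simpa only [← Icc_add_one_left_eq_Ioc, zero_add] using sum_Ioc_consecutive f (Nat.zero_le m) h

theorem brownGap_succ (H : ℕ → ℕ) (n : ℕ) :
    BrownGap H (n + 1) = 1 + ((∑ i ∈ Icc 1 n, H i : ℕ) : ℤ) - H (n + 1) := by
  rw [BrownGap, Nat.add_sub_cancel, Nat.cast_sum]

theorem not_seqComplete_of_brownGap_neg {H : ℕ → ℕ} (hmono : MonotoneOn H (Set.Ici 1))
    {n : ℕ} (hn : 1 ≤ n) (hgap : BrownGap H n < 0) : ¬ SeqComplete H := by
  have hsum : ∑ i ∈ Icc 1 (n - 1), H i + 2 ≤ H n := by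
    rw [BrownGap, ← Nat.cast_sum] at hgap
    omega
  intro hcomp
  obtain ⟨S, hS1, hSsum⟩ := hcomp (H n - 1) (by omega)
  by_cases hlarge : ∃ i ∈ S, n ≤ i
  · obtain ⟨i, hiS, hni⟩ := hlarge
    have := hmono hn (hn.trans hni) hni
    have := single_le_sum (fun j _ => Nat.zero_le (H j)) hiS
    omega
  · push Not at hlarge
    have : ∑ i ∈ S, H i ≤ ∑ i ∈ Icc 1 (n - 1), H i :=
      sum_le_sum_of_subset fun i hi => mem_Icc.2 ⟨hS1 i hi, by have := hlarge i hi; omega⟩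
    omega

namespace IsPLRS

variable {L : ℕ} {c H : ℕ → ℕ}

theorem le_succ (hH : IsPLRS L c H) {n : ℕ} (hn : 1 ≤ n) : H n ≤ H (n + 1) := by
  obtain ⟨hL, hc1, -, -, hinit, hrec⟩ := hH
  have hfirst : ∀ m, 1 ≤ m → H n ≤ ∑ j ∈ Icc 1 m, c j * H (n + 1 - j) := fun m hm =>
    calc H n ≤ c 1 * H (n + 1 - 1) := by simpa using Nat.le_mul_of_pos_left (H n) hc1
      _ ≤ _ := single_le_sum (f := fun j => c j * H (n + 1 - j)) (fun _ _ => Nat.zero_le _)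
          (by simp [hm])
  rcases lt_or_ge n L with h | h
  · rw [hinit n hn h]
    exact (hfirst n hn).trans (Nat.le_succ _)
  · rw [hrec n h]
    exact hfirst L hL

theorem monotoneOn (hH : IsPLRS L c H) : MonotoneOn H (Set.Ici 1) :=
  monotoneOn_nat_Ici_of_le_succ fun _ hn => hH.le_succ hn

end IsPLRS

def onesZeroFour (k j : ℕ) : ℕ := if j ≤ k then 1 else if j = k + 2 then 4 else 0

section OnesZeroFour

variable {k : ℕ} {H : ℕ → ℕ}

theorem sum_onesZeroFour_mul {m : ℕ} (hm : m ≤ k) (f : ℕ → ℕ) :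
    ∑ j ∈ Icc 1 m, onesZeroFour k j * f j = ∑ j ∈ Icc 1 m, f j :=
  sum_congr rfl fun j hj => by simp [onesZeroFour, (mem_Icc.1 hj).2.trans hm]

theorem onesZeroFour_self_add_one : onesZeroFour k (k + 1) = 0 := by
  simp [onesZeroFour]

theorem onesZeroFour_self_add_two : onesZeroFour k (k + 1 + 1) = 4 := by
  simp [onesZeroFour]

theorem H_succ_of_le (hH : IsPLRS (k + 2) (onesZeroFour k) H) {n : ℕ} (hn : n ≤ k) :
    H (n + 1) = ∑ i ∈ Icc 1 n, H i + 1 := by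
  obtain ⟨-, -, -, h1, hinit, -⟩ := hH
  rcases Nat.eq_zero_or_pos n with rfl | hpos
  · simpa using h1
  · rw [hinit n hpos (by omega), sum_onesZeroFour_mul hn, sum_Icc_one_sub_reflect H le_rfl,
      Nat.add_sub_cancel_left]

theorem H_add_two (hH : IsPLRS (k + 2) (onesZeroFour k) H) :
    H (k + 2) = ∑ i ∈ Icc 1 (k + 1), H i := by
  obtain ⟨-, -, -, h1, hinit, -⟩ := hH
  rw [hinit (k + 1) (by omega) (by omega), sum_Icc_succ_top (by omega),
    sum_onesZeroFour_mul le_rfl, sum_Icc_one_sub_reflect H (by omega : k ≤ k + 1),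
    ← sum_Icc_one_add_sum_Icc H (by omega : 1 ≤ k + 1), show k + 1 + 1 - k = 1 + 1 by omega,
    onesZeroFour_self_add_one, Icc_self, sum_singleton, h1]
  ring

theorem H_succ_add_sum_of_ge (hH : IsPLRS (k + 2) (onesZeroFour k) H) {n : ℕ} (hn : k + 2 ≤ n) :
    H (n + 1) + ∑ i ∈ Icc 1 (n - k), H i = ∑ i ∈ Icc 1 n, H i + 4 * H (n - k - 1) := by
  obtain ⟨-, -, -, -, -, hrec⟩ := hH
  rw [hrec n hn, sum_Icc_succ_top (by omega), sum_Icc_succ_top (by omega),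
    sum_onesZeroFour_mul le_rfl, sum_Icc_one_sub_reflect H (by omega), onesZeroFour_self_add_one,
    onesZeroFour_self_add_two, show n + 1 - k = n - k + 1 by omega,
    show n + 1 - (k + 1 + 1) = n - k - 1 by omega, ← sum_Icc_one_add_sum_Icc H (by omega : n - k ≤ n)]
  ring

theorem sum_Icc_add_one_eq_two_pow (hH : IsPLRS (k + 2) (onesZeroFour k) H) {n : ℕ}
    (hn : n ≤ k + 1) : ∑ i ∈ Icc 1 n, H i + 1 = 2 ^ n := by
  induction n with
  | zero => simp
  | succ n ih =>
    rw [sum_Icc_succ_top (by omega), H_succ_of_le hH (by omega), pow_succ]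
    have := ih (by omega)
    omega

theorem H_succ_eq_two_pow (hH : IsPLRS (k + 2) (onesZeroFour k) H) {n : ℕ} (hn : n ≤ k) :
    H (n + 1) = 2 ^ n := by
  rw [H_succ_of_le hH hn, sum_Icc_add_one_eq_two_pow hH (by omega)]

theorem brownGap_succ_of_le (hH : IsPLRS (k + 2) (onesZeroFour k) H) {n : ℕ} (hn : n ≤ k) :
    BrownGap H (n + 1) = 0 := by
  rw [brownGap_succ, H_succ_of_le hH hn]
  push_cast
  ring

theorem brownGap_add_two (hH : IsPLRS (k + 2) (onesZeroFour k) H) : BrownGap H (k + 2) = 1 := by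
  rw [brownGap_succ (n := k + 1), H_add_two hH]
  ring

theorem brownGap_succ_of_ge (hH : IsPLRS (k + 2) (onesZeroFour k) H) {n : ℕ} (hn : k + 2 ≤ n) :
    BrownGap H (n + 1) = 1 + ((∑ i ∈ Icc 1 (n - k), H i : ℕ) : ℤ) - 4 * H (n - k - 1) := by
  have := H_succ_add_sum_of_ge hH hn
  rw [brownGap_succ]
  omega

theorem brownGap_succ_of_ge_of_le (hH : IsPLRS (k + 2) (onesZeroFour k) H) {n : ℕ}
    (h₁ : k + 2 ≤ n) (h₂ : n ≤ 2 * k + 1) : BrownGap H (n + 1) = 0 := by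
  obtain ⟨j, rfl⟩ : ∃ j, n = k + 2 + j := ⟨n - (k + 2), by omega⟩
  have hS := sum_Icc_add_one_eq_two_pow hH (n := j + 2) (by omega)
  have hHj := H_succ_eq_two_pow hH (n := j) (by omega)
  rw [pow_add] at hS
  rw [brownGap_succ_of_ge hH h₁, show k + 2 + j - k = j + 2 by omega,
    show j + 2 - 1 = j + 1 by omega]
  omega

theorem brownGap_two_mul_add_three (hH : IsPLRS (k + 2) (onesZeroFour k) H) :
    BrownGap H (2 * k + 3) = -1 := by
  have hS := sum_Icc_add_one_eq_two_pow hH (n := k + 1) le_rfl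
  have hHk := H_succ_eq_two_pow hH (n := k) le_rfl
  have hS₂ : ∑ i ∈ Icc 1 (k + 2), H i = ∑ i ∈ Icc 1 (k + 1), H i + H (k + 2) :=
    sum_Icc_succ_top (by omega) H
  rw [pow_succ] at hS
  rw [brownGap_succ_of_ge hH (by omega : k + 2 ≤ 2 * k + 2), show 2 * k + 2 - k = k + 2 by omega,
    show k + 2 - 1 = k + 1 by omega, hS₂, H_add_two hH]
  omega

end OnesZeroFour

theorem stmt14_general (k : ℕ) (H : ℕ → ℕ)
    (hH : IsPLRS (k + 2)
      (fun j => if j ≤ k then 1 else if j = k + 2 then 4 else 0) H) :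
    ¬ SeqComplete H ∧
    (∀ n, 1 ≤ n → n ≤ 2 * k + 2 → 0 ≤ BrownGap H n) ∧
    BrownGap H (2 * k + 3) < 0 := by
  have hgap : BrownGap H (2 * k + 3) < 0 := by
    rw [brownGap_two_mul_add_three hH]
    norm_num
  refine ⟨not_seqComplete_of_brownGap_neg hH.monotoneOn (by omega) hgap, ?_, hgap⟩
  intro n hn₁ hn₂
  obtain ⟨m, rfl⟩ : ∃ m, n = m + 1 := ⟨n - 1, by omega⟩
  rcases le_or_gt m k with hm | hm
  · rw [brownGap_succ_of_le hH hm]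
  rcases eq_or_lt_of_le (Nat.succ_le_of_lt hm) with rfl | hm
  · rw [brownGap_add_two hH]
    norm_num
  · rw [brownGap_succ_of_ge_of_le hH hm (by omega)]

theorem stmt14 (k : ℕ) (hk : 1 ≤ k) (H : ℕ → ℕ)
    (hH : IsPLRS (k + 2)
      (fun j => if j ≤ k then 1 else if j = k + 2 then 4 else 0) H) :
    ¬ SeqComplete H ∧
    (∀ n, 1 ≤ n → n ≤ 2 * k + 2 → 0 ≤ BrownGap H n) ∧
    BrownGap H (2 * k + 3) < 0 :=
  stmt14_general k H hH
end
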